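/- arXiv:1912.00520 — 4 statements merged into one kernel-verified Lean document; each statement's English description precedes it below -/
import Mathlib

section
/- If AD_D is an adaptive divergence produced by a family of pseudo-divergences D that is ordered and complete with respect to Jensen-Shannon divergence, then for any two probability distributions P and Q: JSD(P,Q) = 0 if and only if AD_D(P,Q) = 0. -/
/-- Theorem 1: for an adaptive divergence `AD` produced by an ordered and complete
(w.r.t. Jensen-Shannon divergence) family of pseudo-divergences `D`,
`JSD P Q = 0` iff `AD P Q = 0`. -/
theorem adaptive_divergence_zero_iff_jsd_zero
    {Ω : Type*} (JSD : Ω → Ω → ℝ) (D : ℝ → Ω → Ω → ℝ) (AD : Ω → Ω → ℝ)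
    (hJSD_nonneg : ∀ P Q, 0 ≤ JSD P Q)
    (hJSD_eq : ∀ P Q, JSD P Q = 0 ↔ P = Q)
    -- (P1) each Dα is nonnegative
    (hP1 : ∀ α ∈ Set.Icc (0 : ℝ) 1, ∀ P Q, 0 ≤ D α P Q)
    -- (P2) each Dα vanishes on equal distributions
    (hP2 : ∀ α ∈ Set.Icc (0 : ℝ) 1, ∀ P Q, P = Q → D α P Q = 0)
    -- (D1) the family is ordered
    (hD1 : ∀ α₁ α₂ : ℝ, 0 ≤ α₁ → α₁ < α₂ → α₂ ≤ 1 → ∀ P Q, D α₁ P Q ≤ D α₂ P Q)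
    -- (D2) the family is complete w.r.t. JSD
    (hD2 : ∀ P Q, D 1 P Q = JSD P Q)
    -- definition of the adaptive divergence
    (hAD : ∀ P Q, AD P Q =
      sInf {x : ℝ | ∃ α ∈ Set.Icc (0 : ℝ) 1,
        D α P Q = x ∧ (1 - α) * Real.log 2 ≤ D α P Q})
    (P Q : Ω) :
    JSD P Q = 0 ↔ AD P Q = 0 := by
  set S : Set ℝ := {x : ℝ | ∃ α ∈ Set.Icc (0 : ℝ) 1,
      D α P Q = x ∧ (1 - α) * Real.log 2 ≤ D α P Q} with hS
  have h1mem : (1 : ℝ) ∈ Set.Icc (0 : ℝ) 1 := by constructor <;> norm_num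
  have hlog2 : 0 < Real.log 2 := Real.log_pos (by norm_num)
  have hne : (D 1 P Q) ∈ S := by
    refine ⟨1, h1mem, rfl, ?_⟩
    simp only [sub_self, zero_mul]
    exact hP1 1 h1mem P Q
  have hbdd : BddBelow S := by
    refine ⟨0, ?_⟩
    rintro x ⟨α, hα, hx, -⟩
    exact hx ▸ hP1 α hα P Q
  constructor
  · intro h
    have hpq : P = Q := (hJSD_eq P Q).mp h
    have hSeq : S = {0} := by
      ext x
      simp only [Set.mem_singleton_iff, hS, Set.mem_setOf_eq]
      constructor
      · rintro ⟨α, hα, hx, -⟩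
        rw [← hx]
        exact hP2 α hα P Q hpq
      · rintro rfl
        refine ⟨1, h1mem, hP2 1 h1mem P Q hpq, ?_⟩
        simp [hP2 1 h1mem P Q hpq]
    rw [hAD, ← hS, hSeq, csInf_singleton]
  · intro h
    by_contra hJ
    have hJpos : 0 < JSD P Q := lt_of_le_of_ne (hJSD_nonneg P Q) (Ne.symm hJ)
    have hinf0 : sInf S = 0 := by rw [hAD] at h; exact h
    -- first element below JSD
    have h1 : sInf S < JSD P Q := by rw [hinf0]; exact hJpos
    obtain ⟨x₁, hx₁S, hx₁⟩ := exists_lt_of_csInf_lt ⟨_, hne⟩ h1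
    obtain ⟨α₁, hα₁, hDx₁, hfeas₁⟩ := hx₁S
    have hα₁lt : α₁ < 1 := by
      rcases lt_or_eq_of_le hα₁.2 with h' | h'
      · exact h'
      · exfalso; rw [h', hD2] at hDx₁; rw [hDx₁] at hx₁; exact lt_irrefl _ hx₁
    have hpos : 0 < (1 - α₁) * Real.log 2 :=
      mul_pos (by linarith) hlog2
    -- second element below (1-α₁)log2
    have h2 : sInf S < (1 - α₁) * Real.log 2 := by rw [hinf0]; exact hpos
    obtain ⟨x₂, hx₂S, hx₂⟩ := exists_lt_of_csInf_lt ⟨_, hne⟩ h2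
    obtain ⟨α₂, hα₂, hDx₂, hfeas₂⟩ := hx₂S
    have hle : (1 - α₂) * Real.log 2 ≤ x₂ := hDx₂ ▸ hfeas₂
    have hαlt : α₁ < α₂ := by
      by_contra hcon
      push_neg at hcon
      have : (1 - α₁) * Real.log 2 ≤ (1 - α₂) * Real.log 2 :=
        mul_le_mul_of_nonneg_right (by linarith) hlog2.le
      linarith
    have := hD1 α₁ α₂ hα₁.1 hαlt hα₂.2 P Q
    rw [hDx₁, hDx₂] at this
    linarith
end

section
/- For an ordered and complete family of pseudo-divergences {D_α} such that α ↦ D_α(P,Q) is continuous, the adaptive divergence satisfies AD(P,Q) = D_{α*}(P,Q), where α* is the smallest root of the equation D_α(P,Q) = (1−α)·log 2 (such a root exists provided D and the linear function cross, i.e. D₁(P,Q) ≥ 0 and D₀(P,Q) ≤ log 2). -/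
/-- If `α ↦ Dα(P,Q)` is continuous, the adaptive divergence equals `D α* (P,Q)` where
`α*` is the smallest root of `Dα(P,Q) = (1-α) log 2` (such a root exists since
`D₁(P,Q) ≥ 0` and `D₀(P,Q) ≤ log 2`). -/
theorem adaptive_divergence_eq_at_smallest_root
    {Ω : Type*} (D : ℝ → Ω → Ω → ℝ) (AD : Ω → Ω → ℝ)
    (hP1 : ∀ α ∈ Set.Icc (0 : ℝ) 1, ∀ P Q, 0 ≤ D α P Q)
    (hD1 : ∀ α₁ α₂ : ℝ, 0 ≤ α₁ → α₁ < α₂ → α₂ ≤ 1 → ∀ P Q, D α₁ P Q ≤ D α₂ P Q)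
    (hAD : ∀ P Q, AD P Q =
      sInf {x : ℝ | ∃ α ∈ Set.Icc (0 : ℝ) 1,
        D α P Q = x ∧ (1 - α) * Real.log 2 ≤ D α P Q})
    (P Q : Ω)
    (hcont : ContinuousOn (fun α => D α P Q) (Set.Icc 0 1))
    (hcross₀ : D 0 P Q ≤ Real.log 2)
    (hcross₁ : 0 ≤ D 1 P Q) :
    ∃ αs ∈ Set.Icc (0 : ℝ) 1,
      D αs P Q = (1 - αs) * Real.log 2 ∧
      (∀ α ∈ Set.Icc (0 : ℝ) 1, D α P Q = (1 - α) * Real.log 2 → αs ≤ α) ∧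
      AD P Q = D αs P Q := by
  set f : ℝ → ℝ := fun α => D α P Q - (1 - α) * Real.log 2 with hf
  have hfc : ContinuousOn f (Set.Icc 0 1) :=
    hcont.sub (Continuous.continuousOn (by continuity))
  have hf0 : f 0 ≤ 0 := by simp [hf]; linarith
  have hf1 : 0 ≤ f 1 := by simp [hf]; linarith
  -- set of roots
  set R : Set ℝ := Set.Icc 0 1 ∩ f ⁻¹' {0} with hR
  have hRne : R.Nonempty := by
    have := intermediate_value_Icc (by norm_num : (0:ℝ) ≤ 1) hfc
    obtain ⟨α, hα, hval⟩ := this ⟨hf0, hf1⟩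
    exact ⟨α, hα, hval⟩
  have hRclosed : IsClosed R := by
    have : IsClosed (Set.Icc (0:ℝ) 1) := isClosed_Icc
    exact hfc.preimage_isClosed_of_isClosed this isClosed_singleton
  have hRcompact : IsCompact R :=
    IsCompact.of_isClosed_subset isCompact_Icc hRclosed Set.inter_subset_left
  obtain ⟨αs, hαsR, hleast⟩ := hRcompact.exists_isLeast hRne
  obtain ⟨hαsIcc, hαsroot⟩ := hαsR
  have hroot : D αs P Q = (1 - αs) * Real.log 2 := by
    have : f αs = 0 := hαsroot
    simp [hf] at this; linarith
  refine ⟨αs, hαsIcc, hroot, ?_, ?_⟩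
  · intro α hα hαeq
    exact hleast ⟨hα, by simp [hf, hαeq]⟩
  · rw [hAD P Q]
    have key : ∀ α ∈ Set.Icc (0:ℝ) 1, (1 - α) * Real.log 2 ≤ D α P Q → αs ≤ α := by
      intro α hα hge
      by_contra hlt
      push_neg at hlt
      -- α < αs, f α ≥ 0, f 0 ≤ 0 → root in [0, α], contradicting minimality
      have hsub : Set.Icc (0:ℝ) α ⊆ Set.Icc 0 1 := Set.Icc_subset_Icc le_rfl hα.2
      have hfα : 0 ≤ f α := by simp [hf]; linarith
      obtain ⟨β, hβ, hβval⟩ := intermediate_value_Icc hα.1 (hfc.mono hsub) ⟨hf0, hfα⟩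
      have : αs ≤ β := hleast ⟨⟨hβ.1, le_trans hβ.2 hα.2⟩, hβval⟩
      linarith [hβ.2]
    refine IsLeast.csInf_eq (α := ℝ) ?_
    constructor
    · exact ⟨αs, hαsIcc, rfl, le_of_eq hroot.symm⟩
    · rintro x ⟨α, hα, rfl, hge⟩
      have hαs_le : αs ≤ α := key α hα hge
      rcases eq_or_lt_of_le hαs_le with h | h
      · rw [h]
      · exact hD1 αs α hαsIcc.1 h hα.2 P Q
end

section
/- Jensen-Shannon divergence admits the variational characterization JSD(P,Q) = log 2 − inf_{f : X → [0,1]} L(f,P,Q), where L is the binary cross-entropy loss, and the infimum is attained at f*(x) = P(x)/(P(x)+Q(x)) (density ratio w.r.t. the mixture M = (P+Q)/2). -/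
/-!
Pointwise, with `a = p x` and `b = q x`, the loss `-a log t - b log (1 - t)` on `[0, 1]` is
minimised at `t = a / (a + b)`: this is Gibbs' inequality for two points, which follows from
`log x ≤ x - 1`. The minimum is `a log ((a + b) / a) + b log ((a + b) / b)`, so the density ratio
`f*` minimises `L`, and its loss `(1/2) ∫ (a log ((a + b) / a) + b log ((a + b) / b)) dμ` equals
`log 2 - JSD` because `a log (a / ((a + b) / 2)) = a log 2 - a log ((a + b) / a)` and
`∫ p = ∫ q = 1`.
-/

open MeasureTheory ENNReal

noncomputable def logLoss (t : ℝ) : ℝ≥0∞ :=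
  if t = 0 then ⊤ else ENNReal.ofReal (-Real.log t)

lemma logLoss_of_ne_zero {t : ℝ} (ht : t ≠ 0) : logLoss t = ENNReal.ofReal (-Real.log t) :=
  if_neg ht

lemma logLoss_one_sub (t : ℝ) :
    logLoss (1 - t) = if t = 1 then ⊤ else ENNReal.ofReal (-Real.log (1 - t)) := by
  rw [logLoss]
  simp only [sub_eq_zero, @eq_comm ℝ 1 t]

lemma measurable_logLoss : Measurable logLoss :=
  Measurable.ite (measurableSet_singleton 0) measurable_const
    (ENNReal.measurable_ofReal.comp Real.measurable_log.neg)

lemma Measurable.logLoss {X : Type*} [MeasurableSpace X] {f : X → ℝ} (hf : Measurable f) :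
    Measurable fun x => logLoss (f x) :=
  measurable_logLoss.comp hf

/-- Twice the pointwise loss `-(a/2) log t - (b/2) log (1 - t)` at density values `a`, `b`. -/
noncomputable def crossEntropyLoss (a b t : ℝ) : ℝ≥0∞ :=
  ENNReal.ofReal a * logLoss t + ENNReal.ofReal b * logLoss (1 - t)

section Pointwise

variable {a b s t : ℝ}

lemma mul_log_div_le_sub (ha : 0 ≤ a) (hs : 0 < s) : a * Real.log (s / a) ≤ s - a := by
  rcases ha.eq_or_lt with rfl | ha
  · simpa using hs.le
  calc a * Real.log (s / a) ≤ a * (s / a - 1) :=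
        mul_le_mul_of_nonneg_left (Real.log_le_sub_one_of_pos (by positivity)) ha.le
    _ = s - a := by field_simp

lemma mul_log_div_nonneg (ha : 0 ≤ a) (has : a ≤ s) : 0 ≤ a * Real.log (s / a) := by
  rcases ha.eq_or_lt with rfl | ha
  · simp
  exact mul_nonneg ha.le (Real.log_nonneg ((one_le_div ha).2 has))

lemma mul_log_div_half (ha : 0 ≤ a) (has : a ≤ s) :
    a * Real.log (a / (s / 2)) = a * Real.log 2 - a * Real.log (s / a) := by
  rcases ha.eq_or_lt with rfl | ha
  · simp
  have hs : 0 < s := ha.trans_le has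
  rw [div_div_eq_mul_div, Real.log_div (by positivity) hs.ne', Real.log_mul ha.ne' two_ne_zero,
    Real.log_div hs.ne' ha.ne']
  ring

lemma mul_log_add_div_add_mul_log_add_div_le (ha : 0 < a) (hb : 0 < b) (ht0 : 0 < t)
    (ht1 : t < 1) :
    a * Real.log ((a + b) / a) + b * Real.log ((a + b) / b) ≤
      a * -Real.log t + b * -Real.log (1 - t) := by
  have hA := mul_log_div_le_sub ha.le (mul_pos ht0 (add_pos ha hb))
  have hB := mul_log_div_le_sub hb.le (mul_pos (sub_pos.2 ht1) (add_pos ha hb))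
  rw [mul_div_assoc, Real.log_mul ht0.ne' (by positivity)] at hA
  rw [mul_div_assoc, Real.log_mul (sub_pos.2 ht1).ne' (by positivity)] at hB
  linear_combination hA + hB

lemma ofReal_mul_logLoss_div (ha : 0 ≤ a) (has : a ≤ s) :
    ENNReal.ofReal a * logLoss (a / s) = ENNReal.ofReal (a * Real.log (s / a)) := by
  rcases ha.eq_or_lt with rfl | ha
  · simp
  rw [logLoss_of_ne_zero (div_pos ha (ha.trans_le has)).ne', ← Real.log_inv, inv_div,
    ← ENNReal.ofReal_mul ha.le]

lemma crossEntropyLoss_div_add (ha : 0 ≤ a) (hb : 0 ≤ b) :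
    crossEntropyLoss a b (a / (a + b)) =
      ENNReal.ofReal (a * Real.log ((a + b) / a)) +
        ENNReal.ofReal (b * Real.log ((a + b) / b)) := by
  rcases (add_nonneg ha hb).eq_or_lt with hab | hab
  · obtain ⟨rfl, rfl⟩ : a = 0 ∧ b = 0 := ⟨by linarith, by linarith⟩
    simp [crossEntropyLoss]
  rw [crossEntropyLoss, one_sub_div hab.ne', add_sub_cancel_left,
    ofReal_mul_logLoss_div ha (le_add_of_nonneg_right hb),
    ofReal_mul_logLoss_div hb (le_add_of_nonneg_left ha)]

lemma crossEntropyLoss_div_add_le (ha : 0 ≤ a) (hb : 0 ≤ b) (ht : t ∈ Set.Icc 0 1) :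
    crossEntropyLoss a b (a / (a + b)) ≤ crossEntropyLoss a b t := by
  rw [crossEntropyLoss_div_add ha hb]
  rcases ha.eq_or_lt with rfl | ha
  · simp
  rcases hb.eq_or_lt with rfl | hb
  · simp
  obtain ⟨ht0, ht1⟩ := ht
  rcases ht0.eq_or_lt with rfl | ht0
  · simp [crossEntropyLoss, logLoss, ha]
  rcases ht1.eq_or_lt with rfl | ht1
  · simp [crossEntropyLoss, logLoss, hb]
  calc ENNReal.ofReal (a * Real.log ((a + b) / a)) + ENNReal.ofReal (b * Real.log ((a + b) / b))
      = ENNReal.ofReal (a * Real.log ((a + b) / a) + b * Real.log ((a + b) / b)) :=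
        (ENNReal.ofReal_add (mul_log_div_nonneg ha.le (by linarith))
          (mul_log_div_nonneg hb.le (by linarith))).symm
    _ ≤ ENNReal.ofReal (a * -Real.log t + b * -Real.log (1 - t)) :=
        ENNReal.ofReal_le_ofReal (mul_log_add_div_add_mul_log_add_div_le ha hb ht0 ht1)
    _ ≤ crossEntropyLoss a b t := by
        rw [crossEntropyLoss, logLoss_of_ne_zero ht0.ne', logLoss_of_ne_zero (sub_pos.2 ht1).ne',
          ← ENNReal.ofReal_mul ha.le, ← ENNReal.ofReal_mul hb.le]
        exact ENNReal.ofReal_add_le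

end Pointwise

section Integral

variable {X : Type*} [MeasurableSpace X] {μ : Measure X}

lemma integrable_mul_log_div {a s : X → ℝ} (ha : AEMeasurable a μ) (hs : Integrable s μ)
    (ha0 : ∀ x, 0 ≤ a x) (has : ∀ x, a x ≤ s x) :
    Integrable (fun x => a x * Real.log (s x / a x)) μ := by
  refine hs.mono' (ha.mul (hs.aemeasurable.div ha).log).aestronglyMeasurable
    (ae_of_all _ fun x => ?_)
  rw [Real.norm_eq_abs, abs_of_nonneg (mul_log_div_nonneg (ha0 x) (has x))]
  rcases ((ha0 x).trans (has x)).eq_or_lt with hs0 | hs0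
  · simp [le_antisymm (hs0 ▸ has x) (ha0 x), ← hs0]
  · linarith [mul_log_div_le_sub (ha0 x) hs0, ha0 x]

lemma integral_mul_log_div_half {a s : X → ℝ} (ha : Integrable a μ) (hs : Integrable s μ)
    (ha0 : ∀ x, 0 ≤ a x) (has : ∀ x, a x ≤ s x) :
    ∫ x, a x * Real.log (a x / (s x / 2)) ∂μ =
      Real.log 2 * ∫ x, a x ∂μ - ∫ x, a x * Real.log (s x / a x) ∂μ := by
  rw [← integral_const_mul,
    ← integral_sub (ha.const_mul _) (integrable_mul_log_div ha.aemeasurable hs ha0 has)]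
  congr 1 with x
  rw [mul_log_div_half (ha0 x) (has x)]
  ring

lemma lintegral_logLoss_add_lintegral_logLoss {p q : X → ℝ≥0∞} {f : X → ℝ} (hp : Measurable p)
    (hq : Measurable q) (hp_lt : ∀ᵐ x ∂μ, p x < ∞) (hq_lt : ∀ᵐ x ∂μ, q x < ∞)
    (hf : Measurable f) :
    ∫⁻ x, logLoss (f x) ∂μ.withDensity p + ∫⁻ x, logLoss (1 - f x) ∂μ.withDensity q =
      ∫⁻ x, crossEntropyLoss (p x).toReal (q x).toReal (f x) ∂μ := by
  rw [lintegral_withDensity_eq_lintegral_mul _ hp hf.logLoss,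
    lintegral_withDensity_eq_lintegral_mul _ hq (hf.const_sub 1).logLoss,
    ← lintegral_add_left (hp.mul hf.logLoss)]
  refine lintegral_congr_ae ?_
  filter_upwards [hp_lt, hq_lt] with x hpx hqx
  rw [crossEntropyLoss, ofReal_toReal hpx.ne, ofReal_toReal hqx.ne]
  rfl

lemma lintegral_crossEntropyLoss_div_add {a b : X → ℝ} (ha : Integrable a μ)
    (hb : Integrable b μ) (ha0 : ∀ x, 0 ≤ a x) (hb0 : ∀ x, 0 ≤ b x) :
    ∫⁻ x, crossEntropyLoss (a x) (b x) (a x / (a x + b x)) ∂μ =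
      ENNReal.ofReal (∫ x, a x * Real.log ((a x + b x) / a x) ∂μ +
        ∫ x, b x * Real.log ((a x + b x) / b x) ∂μ) := by
  have hle_a x : a x ≤ a x + b x := le_add_of_nonneg_right (hb0 x)
  have hle_b x : b x ≤ a x + b x := le_add_of_nonneg_left (ha0 x)
  have hs : Integrable (fun x => a x + b x) μ := ha.add hb
  have hia := integrable_mul_log_div ha.aemeasurable hs ha0 hle_a
  have hib := integrable_mul_log_div hb.aemeasurable hs hb0 hle_b
  rw [lintegral_congr fun x => crossEntropyLoss_div_add (ha0 x) (hb0 x),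
    ENNReal.ofReal_add (integral_nonneg fun x => mul_log_div_nonneg (ha0 x) (hle_a x))
      (integral_nonneg fun x => mul_log_div_nonneg (hb0 x) (hle_b x)),
    ofReal_integral_eq_lintegral_ofReal hia
      (ae_of_all _ fun x => mul_log_div_nonneg (ha0 x) (hle_a x)),
    ofReal_integral_eq_lintegral_ofReal hib
      (ae_of_all _ fun x => mul_log_div_nonneg (hb0 x) (hle_b x)),
    lintegral_add_left' hia.aemeasurable.ennreal_ofReal]

lemma half_mul_lintegral_crossEntropyLoss_div_add {a b : X → ℝ} (ha : Integrable a μ)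
    (hb : Integrable b μ) (ha0 : ∀ x, 0 ≤ a x) (hb0 : ∀ x, 0 ≤ b x)
    (ha1 : ∫ x, a x ∂μ = 1) (hb1 : ∫ x, b x ∂μ = 1) :
    1 / 2 * ∫⁻ x, crossEntropyLoss (a x) (b x) (a x / (a x + b x)) ∂μ =
      ENNReal.ofReal (Real.log 2 -
        (1 / 2 * ∫ x, a x * Real.log (a x / ((a x + b x) / 2)) ∂μ +
          1 / 2 * ∫ x, b x * Real.log (b x / ((a x + b x) / 2)) ∂μ)) := by
  have hs : Integrable (fun x => a x + b x) μ := ha.add hb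
  rw [lintegral_crossEntropyLoss_div_add ha hb ha0 hb0,
    integral_mul_log_div_half ha hs ha0 (fun x => le_add_of_nonneg_right (hb0 x)),
    integral_mul_log_div_half hb hs hb0 (fun x => le_add_of_nonneg_left (ha0 x)), ha1, hb1,
    mul_comm, ← div_eq_mul_one_div, ← ofReal_ofNat 2, ← ENNReal.ofReal_div_of_pos two_pos]
  congr 1
  ring

variable {p : X → ℝ≥0∞} [IsProbabilityMeasure (μ.withDensity p)]

lemma lintegral_eq_one_of_isProbabilityMeasure_withDensity : ∫⁻ x, p x ∂μ = 1 := by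
  simpa [withDensity_apply _ MeasurableSet.univ] using measure_univ (μ := μ.withDensity p)

lemma ae_lt_top_of_isProbabilityMeasure_withDensity (hp : AEMeasurable p μ) :
    ∀ᵐ x ∂μ, p x < ∞ :=
  ae_lt_top' hp (by simp [lintegral_eq_one_of_isProbabilityMeasure_withDensity])

lemma integrable_toReal_of_isProbabilityMeasure_withDensity (hp : AEMeasurable p μ) :
    Integrable (fun x => (p x).toReal) μ :=
  integrable_toReal_of_lintegral_ne_top hp
    (by simp [lintegral_eq_one_of_isProbabilityMeasure_withDensity])

lemma integral_toReal_eq_one_of_isProbabilityMeasure_withDensity (hp : AEMeasurable p μ) :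
    ∫ x, (p x).toReal ∂μ = 1 := by
  rw [integral_toReal hp (ae_lt_top_of_isProbabilityMeasure_withDensity hp),
    lintegral_eq_one_of_isProbabilityMeasure_withDensity, toReal_one]

end Integral

/-- Variational characterization of the Jensen-Shannon divergence:
`JSD(P,Q) = log 2 - inf_{f : X → [0,1]} L(f,P,Q)` where `L` is the binary
cross-entropy loss (valued in `[0,∞]`, with `log 0 = -∞`), and the infimum is
attained at the density ratio `f*(x) = p(x) / (p(x) + q(x))`. -/
theorem jsd_variational_characterization
    {X : Type*} [MeasurableSpace X] (μ : Measure X) (p q : X → ℝ≥0∞)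
    (hp : Measurable p) (hq : Measurable q)
    (P Q : Measure X)
    (hP : P = μ.withDensity p) (hQ : Q = μ.withDensity q)
    [IsProbabilityMeasure P] [IsProbabilityMeasure Q]
    (F : Set (X → ℝ)) (hF : F = {f | Measurable f ∧ ∀ x, f x ∈ Set.Icc (0 : ℝ) 1})
    (L : (X → ℝ) → ℝ≥0∞)
    -- binary cross-entropy loss, valued in [0,∞]
    (hL : ∀ f, L f =
        (1 / 2) * ∫⁻ x, (if f x = 0 then ⊤ else ENNReal.ofReal (-Real.log (f x))) ∂P
      + (1 / 2) * ∫⁻ x, (if f x = 1 then ⊤ else ENNReal.ofReal (-Real.log (1 - f x))) ∂Q)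
    (JSD : ℝ)
    -- JSD(P,Q) = (1/2)[KL(P‖M) + KL(Q‖M)] with M = (P+Q)/2, written via densities
    (hJSD : JSD =
        (1 / 2) * ∫ x, (p x).toReal *
            Real.log ((p x).toReal / (((p x).toReal + (q x).toReal) / 2)) ∂μ
      + (1 / 2) * ∫ x, (q x).toReal *
            Real.log ((q x).toReal / (((p x).toReal + (q x).toReal) / 2)) ∂μ)
    (fstar : X → ℝ)
    (hfstar : ∀ x, fstar x = (p x).toReal / ((p x).toReal + (q x).toReal)) :
    sInf (L '' F) = ENNReal.ofReal (Real.log 2 - JSD) ∧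
    L fstar = sInf (L '' F) := by
  subst hP hQ hF
  have hpm : AEMeasurable p μ := hp.aemeasurable
  have hqm : AEMeasurable q μ := hq.aemeasurable
  have hp0 x : 0 ≤ (p x).toReal := toReal_nonneg
  have hq0 x : 0 ≤ (q x).toReal := toReal_nonneg
  have hLf f (hf : Measurable f) :
      L f = 1 / 2 * ∫⁻ x, crossEntropyLoss (p x).toReal (q x).toReal (f x) ∂μ := by
    rw [hL, ← mul_add]
    simp_rw [← logLoss_one_sub]
    exact congrArg _ (lintegral_logLoss_add_lintegral_logLoss hp hq
      (ae_lt_top_of_isProbabilityMeasure_withDensity hpm)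
      (ae_lt_top_of_isProbabilityMeasure_withDensity hqm) hf)
  have hfstar_eq : fstar = fun x => (p x).toReal / ((p x).toReal + (q x).toReal) := funext hfstar
  have hfm : Measurable fstar := by rw [hfstar_eq]; fun_prop
  have hleast : IsLeast (L '' {f | Measurable f ∧ ∀ x, f x ∈ Set.Icc (0 : ℝ) 1}) (L fstar) := by
    refine ⟨⟨fstar, ⟨hfm, fun x => hfstar x ▸ ⟨by positivity, div_le_one_of_le₀
      (le_add_of_nonneg_right (hq0 x)) (by positivity)⟩⟩, rfl⟩, ?_⟩
    rintro _ ⟨f, ⟨hf, hf01⟩, rfl⟩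
    rw [hLf _ hfm, hLf f hf, hfstar_eq]
    gcongr with x
    exact crossEntropyLoss_div_add_le (hp0 x) (hq0 x) (hf01 x)
  have hval : L fstar = ENNReal.ofReal (Real.log 2 - JSD) := by
    rw [hLf _ hfm, hfstar_eq, hJSD]
    exact half_mul_lintegral_crossEntropyLoss_div_add
      (integrable_toReal_of_isProbabilityMeasure_withDensity hpm)
      (integrable_toReal_of_isProbabilityMeasure_withDensity hqm) hp0 hq0
      (integral_toReal_eq_one_of_isProbabilityMeasure_withDensity hpm)
      (integral_toReal_eq_one_of_isProbabilityMeasure_withDensity hqm)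
  rw [hleast.csInf_eq]
  exact ⟨hval, rfl⟩
end

section
/- If {D_α} is an ordered and complete family w.r.t. JSD and α ↦ D_α(P,Q) is continuous on [0,1] for fixed P, Q, then the function h(α) = D_α(P,Q) − (1−α)log 2 is strictly increasing, in particular has at most one sign change from negative to nonnegative, and AD(P,Q) = D_{α*}(P,Q) where α* = inf{α : h(α) ≥ 0}; moreover α* satisfies h(α*) = 0 whenever α* > 0. -/
/-- For an ordered and complete family with `α ↦ Dα(P,Q)` continuous on `[0,1]`,
the function `h(α) = Dα(P,Q) - (1-α) log 2` is strictly increasing (sum of a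
nondecreasing and a strictly increasing function), `AD(P,Q) = D α* (P,Q)` where
`α* = inf {α | h(α) ≥ 0}`, and `h(α*) = 0` whenever `α* > 0`. -/
theorem adaptive_divergence_via_strictly_increasing_gap
    {Ω : Type*} (JSD : Ω → Ω → ℝ) (D : ℝ → Ω → Ω → ℝ)
    (hJSD_nonneg : ∀ P Q, 0 ≤ JSD P Q)
    (hP1 : ∀ α ∈ Set.Icc (0 : ℝ) 1, ∀ P Q, 0 ≤ D α P Q)
    (hD1 : ∀ α₁ α₂ : ℝ, 0 ≤ α₁ → α₁ < α₂ → α₂ ≤ 1 → ∀ P Q, D α₁ P Q ≤ D α₂ P Q)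
    (hD2 : ∀ P Q, D 1 P Q = JSD P Q)
    (P Q : Ω)
    (hcont : ContinuousOn (fun α => D α P Q) (Set.Icc 0 1))
    (h : ℝ → ℝ) (hh : ∀ α, h α = D α P Q - (1 - α) * Real.log 2)
    (αs : ℝ) (hαs : αs = sInf {α ∈ Set.Icc (0 : ℝ) 1 | 0 ≤ h α})
    (AD : ℝ)
    (hAD : AD = sInf ((fun α => D α P Q) '' {α ∈ Set.Icc (0 : ℝ) 1 | 0 ≤ h α})) :
    StrictMonoOn h (Set.Icc 0 1) ∧ AD = D αs P Q ∧ (0 < αs → h αs = 0) := by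
  have hlog : 0 < Real.log 2 := Real.log_pos one_lt_two
  set S : Set ℝ := {α ∈ Set.Icc (0 : ℝ) 1 | 0 ≤ h α} with hS
  have h1S : (1 : ℝ) ∈ S := by
    refine ⟨⟨zero_le_one, le_refl 1⟩, ?_⟩
    rw [hh]; simp [hD2]; exact hJSD_nonneg P Q
  have hne : S.Nonempty := ⟨1, h1S⟩
  have hbdd : BddBelow S := ⟨0, fun x hx => hx.1.1⟩
  have hαs_mem : αs ∈ Set.Icc (0 : ℝ) 1 := by
    constructor
    · rw [hαs]; exact le_csInf hne fun x hx => hx.1.1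
    · rw [hαs]; exact csInf_le hbdd h1S
  have hheq : h = fun α => D α P Q - (1 - α) * Real.log 2 := funext hh
  have hcont_h : ContinuousOn h (Set.Icc 0 1) := by
    rw [hheq]
    exact hcont.sub (Continuous.continuousOn (by continuity))
  -- strict monotonicity
  have hmono : StrictMonoOn h (Set.Icc 0 1) := by
    intro a ha b hb hab
    rw [hh, hh]
    have hD := hD1 a b ha.1 hab hb.2 P Q
    nlinarith
  -- S is closed
  have hSclosed : IsClosed S := by
    have : S = Set.Icc (0:ℝ) 1 ∩ h ⁻¹' Set.Ici 0 := by
      ext x; simp [hS, Set.mem_sep_iff]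
    rw [this]
    exact hcont_h.preimage_isClosed_of_isClosed isClosed_Icc isClosed_Ici
  have hαs_S : αs ∈ S := by rw [hαs]; exact hSclosed.csInf_mem hne hbdd
  refine ⟨hmono, ?_, ?_⟩
  · -- AD = D αs P Q
    rw [hAD]
    apply le_antisymm
    · exact csInf_le ⟨0, fun y ⟨x, hx, hxy⟩ => hxy ▸ hP1 x hx.1 P Q⟩ ⟨αs, hαs_S, rfl⟩
    · refine le_csInf ⟨D 1 P Q, 1, h1S, rfl⟩ ?_
      rintro y ⟨x, hx, rfl⟩
      have hle : αs ≤ x := hαs ▸ csInf_le hbdd hx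
      rcases eq_or_lt_of_le hle with heq | hlt
      · rw [heq]
      · exact hD1 αs x hαs_mem.1 hlt hx.1.2 P Q
  · -- 0 < αs → h αs = 0
    intro hpos
    have hneg : ∀ α ∈ Set.Ico (0:ℝ) αs, h α ≤ 0 := by
      intro α hα
      by_contra hc
      push_neg at hc
      have : α ∈ S := ⟨⟨hα.1, hα.2.le.trans hαs_mem.2⟩, hc.le⟩
      have := hαs ▸ csInf_le hbdd this
      linarith [hα.2]
    have hnb : (nhdsWithin αs (Set.Ico 0 αs)).NeBot := by
      rw [← mem_closure_iff_nhdsWithin_neBot]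
      rw [closure_Ico (ne_of_lt hpos)]
      exact ⟨le_of_lt hpos, le_refl αs⟩
    have htend : Filter.Tendsto h (nhdsWithin αs (Set.Ico 0 αs)) (nhds (h αs)) := by
      have := (hcont_h αs hαs_mem).mono
        (s := Set.Ico 0 αs) (fun x hx => ⟨hx.1, hx.2.le.trans hαs_mem.2⟩)
      exact this.tendsto
    have hle0 : h αs ≤ 0 :=
      le_of_tendsto htend (Filter.eventually_iff_exists_mem.2
        ⟨Set.Ico 0 αs, self_mem_nhdsWithin, hneg⟩)
    exact le_antisymm hle0 hαs_S.2
end
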